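/- For every integer k ≥ 2 there exists a connected graph G with fes(G) = k and MEG(G) = 3k + |L(G)|, where |L(G)| is the number of leaves of G. -/

import Mathlib

open SimpleGraph

/-- Two vertices `x` and `y` monitor an edge `e` in `G`: there is a shortest path between
them, and `e` lies on every shortest path between `x` and `y`. -/
def Monitors {V : Type*} (G : SimpleGraph V) (x y : V) (e : Sym2 V) : Prop :=
  (∃ p : G.Walk x y, p.IsPath ∧ p.length = G.dist x y) ∧
    ∀ p : G.Walk x y, p.IsPath → p.length = G.dist x y → e ∈ p.edges

/-- `S` is a monitoring edge-geodetic set of `G`. -/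
def IsMEGSet {V : Type*} (G : SimpleGraph V) (S : Set V) : Prop :=
  ∀ e ∈ G.edgeSet, ∃ x ∈ S, ∃ y ∈ S, Monitors G x y e

/-- The minimum size of a monitoring edge-geodetic set of `G`. -/
noncomputable def megNum {V : Type*} (G : SimpleGraph V) : ℕ :=
  sInf {n | ∃ S : Set V, IsMEGSet G S ∧ S.ncard = n}

/-- The set of leaves (degree-1 vertices) of `G`. -/
def leaves {V : Type*} (G : SimpleGraph V) : Set V :=
  {v | (G.neighborSet v).ncard = 1}


/-- The feedback edge set number (cyclomatic number) of `G`. -/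
noncomputable def fes {V : Type*} (G : SimpleGraph V) : ℕ :=
  sInf {n | ∃ F : Set (Sym2 V), F ⊆ G.edgeSet ∧ (G.deleteEdges F).IsAcyclic ∧ F.ncard = n}


/-!
The witness is the bouquet of `k` four-cycles `hub – left i – opp i – right i – hub` glued at
`hub`: a connected graph with `3k + 1` vertices, `4k` edges and no leaves.

For a connected finite graph `fes = |E| - |V| + 1`: the edges outside a spanning tree form a
feedback edge set, and any acyclic remainder extends to a spanning tree. This gives `fes = k`.

Every vertex `v ≠ hub` lies in every MEG-set, because any two non-adjacent neighbours of `v` have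
a second common neighbour: a shortest path through `v` can be rerouted around it, so no pair of
vertices other than `v` monitors an edge at `v`. Conversely, for `k ≥ 2` the non-hub vertices
form an MEG-set: the edge `hub – left i` lies on the unique shortest path from `left i` to
`right j` for `j ≠ i`, and symmetrically for `hub – right i`. Hence `MEG = 3k`.
-/

namespace SimpleGraph

variable {V : Type*} {G : SimpleGraph V}

lemma Connected.ncard_edgeSet_add_one_le_of_isAcyclic [Finite V] (hG : G.Connected)
    {F : Set (Sym2 V)} (hF : (G.deleteEdges F).IsAcyclic) :
    G.edgeSet.ncard + 1 ≤ Nat.card V + F.ncard := by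
  obtain ⟨T, hFT, -, hT⟩ := hG.exists_isTree_le_of_le_of_isAcyclic (G.deleteEdges_le F) hF
  have hET : G.edgeSet \ F ⊆ T.edgeSet := edgeSet_deleteEdges F ▸ edgeSet_mono hFT
  have hcard := (isTree_iff_connected_and_card.mp hT).2
  rw [Nat.card_coe_set_eq] at hcard
  have := Set.ncard_le_ncard_sdiff_add_ncard G.edgeSet F
  have := Set.ncard_le_ncard hET
  omega

lemma Connected.exists_deleteEdges_isAcyclic [Finite V] (hG : G.Connected) :
    ∃ F ⊆ G.edgeSet, (G.deleteEdges F).IsAcyclic ∧ G.edgeSet.ncard + 1 = Nat.card V + F.ncard := by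
  obtain ⟨T, hTG, hT⟩ := hG.exists_isTree_le
  have hET : T.edgeSet ⊆ G.edgeSet := edgeSet_mono hTG
  have hdel : G.deleteEdges (G.edgeSet \ T.edgeSet) = T := by
    rw [← edgeSet_inj, edgeSet_deleteEdges, Set.sdiff_sdiff_cancel_left hET]
  have hcard := (isTree_iff_connected_and_card.mp hT).2
  rw [Nat.card_coe_set_eq] at hcard
  have := Set.ncard_le_ncard hET
  refine ⟨_, Set.sdiff_subset, hdel ▸ hT.isAcyclic, ?_⟩
  rw [Set.ncard_sdiff hET]
  omega

lemma Connected.fes_add_card [Finite V] (hG : G.Connected) :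
    fes G + Nat.card V = G.edgeSet.ncard + 1 := by
  obtain ⟨F, hFG, hF, hFcard⟩ := hG.exists_deleteEdges_isAcyclic
  have hfes_le : fes G ≤ F.ncard := Nat.sInf_le ⟨F, hFG, hF, rfl⟩
  obtain ⟨F', -, hF', hF'card⟩ : ∃ F' : Set (Sym2 V), F' ⊆ G.edgeSet ∧
      (G.deleteEdges F').IsAcyclic ∧ F'.ncard = fes G :=
    Nat.sInf_mem (s := {n | ∃ F : Set (Sym2 V), F ⊆ G.edgeSet ∧ (G.deleteEdges F).IsAcyclic ∧
      F.ncard = n}) ⟨_, F, hFG, hF, rfl⟩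
  have := hG.ncard_edgeSet_add_one_le_of_isAcyclic hF'
  omega

lemma leaves_map {W : Type*} (f : V ↪ W) : leaves (G.map f) = f '' leaves G := by
  ext w
  by_cases hw : w ∈ Set.range f
  · obtain ⟨v, rfl⟩ := hw
    simp only [leaves, Set.mem_ofPred_eq, neighborSet_map, f.injective.mem_set_image,
      Set.ncard_image_of_injective _ f.injective]
  · have : (G.map f).neighborSet w = ∅ := by
      ext u
      simp only [mem_neighborSet, map_adj, Set.mem_empty_iff_false, iff_false]
      rintro ⟨v, -, -, rfl, -⟩
      exact hw ⟨v, rfl⟩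
    simp only [leaves, Set.mem_ofPred_eq, this, Set.ncard_empty, zero_ne_one, false_iff]
    rintro ⟨v, -, rfl⟩
    exact hw ⟨v, rfl⟩

lemma ncard_edgeSet_map {W : Type*} (f : V ↪ W) : (G.map f).edgeSet.ncard = G.edgeSet.ncard := by
  rw [edgeSet_map, Set.ncard_image_of_injective _ f.sym2Map.injective]

lemma sum_ncard_neighborSet [Fintype V] :
    ∑ v, (G.neighborSet v).ncard = 2 * G.edgeSet.ncard := by
  classical
  simp only [← Nat.card_coe_set_eq, Nat.card_eq_fintype_card, card_neighborSet_eq_degree,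
    card_edgeSet]
  exact G.sum_degrees_eq_twice_card_edges

lemma monitors_of_adj {u v : V} (h : G.Adj u v) : Monitors G u v s(u, v) := by
  have hd : G.dist u v = 1 := dist_eq_one_iff_adj.mpr h
  refine ⟨⟨h.toWalk, by simp [h.ne], by simp [hd]⟩, fun p _ hp => ?_⟩
  rw [hd] at hp
  rcases p with _ | ⟨h1, _ | ⟨h2, _⟩⟩ <;> simp at hp ⊢

lemma monitors_of_forall_adj_adj_eq {x u y : V} (hne : x ≠ y) (hxy : ¬G.Adj x y)
    (hxu : G.Adj x u) (huy : G.Adj u y) (huniq : ∀ w, G.Adj x w → G.Adj w y → w = u) :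
    Monitors G x y s(x, u) := by
  let p : G.Walk x y := .cons hxu (.cons huy .nil)
  have hd : G.dist x y = 2 :=
    le_antisymm (dist_le p) (Reachable.one_lt_dist_of_ne_of_not_adj ⟨p⟩ hne hxy)
  refine ⟨⟨p, p.isPath_of_length_eq_dist (by simp [p, hd]), by simp [p, hd]⟩, fun q _ hq => ?_⟩
  rw [hd] at hq
  rcases q with _ | ⟨h1, _ | ⟨h2, _ | ⟨_, _⟩⟩⟩ <;> simp at hq
  obtain rfl := huniq _ h1 h2
  simp

def HasDetours (G : SimpleGraph V) (v : V) : Prop :=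
  ∀ ⦃x y⦄, G.Adj v x → G.Adj v y → x ≠ y → ¬G.Adj x y → ∃ z ≠ v, G.Adj x z ∧ G.Adj z y

-- Only `support.tail` avoids `v`: the induction passes through walks starting at `v`.
lemma HasDetours.exists_walk_length_le {v : V} (hv : G.HasDetours v) {s t : V}
    (p : G.Walk s t) (ht : t ≠ v) : ∃ q : G.Walk s t, q.length ≤ p.length ∧ v ∉ q.support.tail := by
  induction p with
  | nil => exact ⟨.nil, le_rfl, by simp⟩
  | @cons s u t hsu p ih =>
    obtain ⟨q, hqp, hqv⟩ := ih ht
    by_cases hu : u = v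
    · subst hu
      cases q with
      | nil => exact absurd rfl ht
      | @cons _ w _ huw q =>
        simp only [Walk.support_cons, List.tail_cons, Walk.length_cons] at hqv hqp
        by_cases hsw : s = w
        · subst hsw
          exact ⟨q, by simp; omega, fun h => hqv (List.mem_of_mem_tail h)⟩
        by_cases hadj : G.Adj s w
        · exact ⟨.cons hadj q, by simp; omega, by simpa using hqv⟩
        obtain ⟨z, hzu, hsz, hzw⟩ := hv hsu.symm huw hsw hadj
        exact ⟨.cons hsz (.cons hzw q), by simp; omega, by simp [hqv, Ne.symm hzu]⟩
    · refine ⟨.cons hsu q, by simp [hqp], ?_⟩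
      rw [Walk.support_cons, List.tail_cons, ← q.cons_tail_support, List.mem_cons, not_or]
      exact ⟨Ne.symm hu, hqv⟩

lemma HasDetours.mem_of_isMEGSet {v w : V} (hv : G.HasDetours v) (hvw : G.Adj v w) {S : Set V}
    (hS : IsMEGSet G S) : v ∈ S := by
  obtain ⟨x, hx, y, hy, ⟨p, -, hp⟩, hall⟩ := hS s(v, w) hvw
  by_contra hvS
  have hxv : x ≠ v := by rintro rfl; exact hvS hx
  have hyv : y ≠ v := by rintro rfl; exact hvS hy
  obtain ⟨q, hqp, hqv⟩ := hv.exists_walk_length_le p hyv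
  have hq : q.length = G.dist x y := le_antisymm (hqp.trans hp.le) (dist_le q)
  have hvq := q.fst_mem_support_of_mem_edges (hall q (q.isPath_of_length_eq_dist hq) hq)
  rw [← q.cons_tail_support] at hvq
  exact (List.mem_cons.mp hvq).elim (fun h => hxv h.symm) hqv

lemma megNum_eq_ncard [Finite V] {S : Set V} (hS : IsMEGSet G S)
    (hmin : ∀ T, IsMEGSet G T → S ⊆ T) : megNum G = S.ncard :=
  le_antisymm (Nat.sInf_le ⟨S, hS, rfl⟩) <| le_csInf ⟨_, S, hS, rfl⟩ <| by
    rintro _ ⟨T, hT, rfl⟩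
    exact Set.ncard_le_ncard (hmin T hT)

namespace Iso

variable {W : Type*} {H : SimpleGraph W} (φ : G ≃g H)

lemma dist_apply_le (u v : V) : H.dist (φ u) (φ v) ≤ G.dist u v := by
  by_cases hr : G.Reachable u v
  · obtain ⟨p, hp⟩ := hr.exists_walk_length_eq_dist
    simpa [hp] using SimpleGraph.dist_le (p.map φ.toHom)
  · rw [dist_eq_zero_of_not_reachable (φ.reachable_iff.not.mpr hr)]
    exact Nat.zero_le _

lemma dist_apply (u v : V) : H.dist (φ u) (φ v) = G.dist u v :=
  le_antisymm (φ.dist_apply_le u v) (by simpa using φ.symm.dist_apply_le (φ u) (φ v))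

lemma monitors_apply {x y : V} {e : Sym2 V} (h : Monitors G x y e) :
    Monitors H (φ x) (φ y) (e.map φ) := by
  obtain ⟨⟨p, hp, hpl⟩, hall⟩ := h
  refine ⟨⟨p.map φ.toHom, hp.map φ.injective, by simp [hpl, φ.dist_apply]⟩, fun q hq hql => ?_⟩
  let q' : G.Walk x y := (q.map φ.symm.toHom).copy (by simp) (by simp)
  have hq' : e ∈ q'.edges := hall q' (by simpa [q'] using hq.map φ.symm.injective)
    (by simp [q', hql, φ.dist_apply])
  obtain ⟨f, hf, rfl⟩ := List.mem_map.mp (by simpa [q'] using hq')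
  simpa [Sym2.map_map, Function.comp_def] using hf

lemma isMEGSet_image {S : Set V} (h : IsMEGSet G S) : IsMEGSet H (φ '' S) := by
  intro e he
  obtain ⟨x, hx, y, hy, hm⟩ := h (e.map φ.symm) (φ.symm.map_mem_edgeSet_iff.mpr he)
  refine ⟨φ x, Set.mem_image_of_mem _ hx, φ y, Set.mem_image_of_mem _ hy, ?_⟩
  simpa [Sym2.map_map, Function.comp_def] using φ.monitors_apply hm

lemma megNum_eq (φ : G ≃g H) : megNum H = megNum G := by
  unfold megNum
  congr 1
  ext n
  constructor
  · rintro ⟨S, hS, rfl⟩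
    exact ⟨φ.symm '' S, φ.symm.isMEGSet_image hS, Set.ncard_image_of_injective _ φ.symm.injective⟩
  · rintro ⟨S, hS, rfl⟩
    exact ⟨φ '' S, φ.isMEGSet_image hS, Set.ncard_image_of_injective _ φ.injective⟩

end Iso

end SimpleGraph

namespace Bouquet

inductive Vertex (k : ℕ) : Type
  | hub : Vertex k
  | left : Fin k → Vertex k
  | opp : Fin k → Vertex k
  | right : Fin k → Vertex k
  deriving DecidableEq

namespace Vertex

variable {k : ℕ}

def equivOption : Vertex k ≃ Option (Fin k ⊕ Fin k ⊕ Fin k) where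
  toFun
    | hub => none
    | left i => some (.inl i)
    | opp i => some (.inr (.inl i))
    | right i => some (.inr (.inr i))
  invFun
    | none => hub
    | some (.inl i) => left i
    | some (.inr (.inl i)) => opp i
    | some (.inr (.inr i)) => right i
  left_inv v := by cases v <;> rfl
  right_inv o := by rcases o with _ | i | i | i <;> rfl

instance : Fintype (Vertex k) := .ofEquiv _ equivOption.symm

lemma sum_eq {M : Type*} [AddCommMonoid M] (f : Vertex k → M) :
    ∑ v, f v = f hub + ∑ i, (f (left i) + f (opp i) + f (right i)) := by
  rw [← equivOption.symm.sum_comp]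
  simp [Fintype.sum_option, Fintype.sum_sum_type, Finset.sum_add_distrib, add_assoc]
  rfl

lemma card_eq : Fintype.card (Vertex k) = 3 * k + 1 := by
  rw [Fintype.card_eq_sum_ones, sum_eq]
  simp
  ring

end Vertex

open Vertex

def graph (k : ℕ) : SimpleGraph (Vertex k) :=
  fromEdgeSet (⋃ i, {s(hub, left i), s(left i, opp i), s(opp i, right i), s(right i, hub)})

variable {k : ℕ}

lemma neighborSet_hub : (graph k).neighborSet hub = Set.range left ∪ Set.range right := by
  ext v; cases v <;> simp [graph, eq_comm]

lemma neighborSet_left (i : Fin k) : (graph k).neighborSet (left i) = {hub, opp i} := by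
  ext v; cases v <;> simp [graph, eq_comm]

lemma neighborSet_opp (i : Fin k) : (graph k).neighborSet (opp i) = {left i, right i} := by
  ext v; cases v <;> simp [graph, eq_comm]

lemma neighborSet_right (i : Fin k) : (graph k).neighborSet (right i) = {hub, opp i} := by
  ext v; cases v <;> simp [graph, eq_comm]

lemma adj_left_hub (i : Fin k) : (graph k).Adj (left i) hub := by simp [graph]

lemma adj_right_hub (i : Fin k) : (graph k).Adj (right i) hub := by simp [graph]

lemma adj_left_opp (i : Fin k) : (graph k).Adj (left i) (opp i) := by simp [graph]

lemma adj_right_opp (i : Fin k) : (graph k).Adj (right i) (opp i) := by simp [graph]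

lemma connected_graph : (graph k).Connected := by
  have reach (v : Vertex k) : (graph k).Reachable v hub := by
    cases v with
    | hub => rfl
    | left i => exact (adj_left_hub i).reachable
    | opp i => exact (adj_right_opp i).symm.reachable.trans (adj_right_hub i).reachable
    | right i => exact (adj_right_hub i).reachable
  exact ((graph k).connected_iff_exists_forall_reachable).mpr ⟨hub, fun v => (reach v).symm⟩

lemma ncard_neighborSet_hub : ((graph k).neighborSet hub).ncard = 2 * k := by
  have hdisj : Disjoint (Set.range (left (k := k))) (Set.range right) :=
    Set.disjoint_left.mpr (by rintro _ ⟨i, rfl⟩ ⟨j, hj⟩; cases hj)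
  rw [neighborSet_hub, Set.ncard_union_eq hdisj,
    Set.ncard_range_of_injective fun _ _ => Vertex.left.inj,
    Set.ncard_range_of_injective fun _ _ => Vertex.right.inj]
  simp
  ring

lemma ncard_neighborSet_left (i : Fin k) : ((graph k).neighborSet (left i)).ncard = 2 := by
  rw [neighborSet_left, Set.ncard_pair (by simp)]

lemma ncard_neighborSet_opp (i : Fin k) : ((graph k).neighborSet (opp i)).ncard = 2 := by
  rw [neighborSet_opp, Set.ncard_pair (by simp)]

lemma ncard_neighborSet_right (i : Fin k) : ((graph k).neighborSet (right i)).ncard = 2 := by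
  rw [neighborSet_right, Set.ncard_pair (by simp)]

lemma ncard_edgeSet_graph : (graph k).edgeSet.ncard = 4 * k := by
  have := (graph k).sum_ncard_neighborSet
  simp only [sum_eq, ncard_neighborSet_hub, ncard_neighborSet_left, ncard_neighborSet_opp,
    ncard_neighborSet_right, Finset.sum_const, Finset.card_univ, Fintype.card_fin,
    smul_eq_mul] at this
  omega

lemma leaves_graph : leaves (graph k) = ∅ := by
  refine Set.eq_empty_of_forall_notMem fun v (hv : _ = 1) => ?_
  cases v <;> simp only [ncard_neighborSet_hub, ncard_neighborSet_left, ncard_neighborSet_opp,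
    ncard_neighborSet_right] at hv <;> omega

lemma hasDetours_left (i : Fin k) : (graph k).HasDetours (left i) := by
  intro x y hx hy hxy _
  rw [← mem_neighborSet, neighborSet_left] at hx hy
  refine ⟨right i, by simp, ?_⟩
  rcases hx with rfl | rfl <;> rcases hy with rfl | rfl <;> simp_all [graph]

lemma hasDetours_opp (i : Fin k) : (graph k).HasDetours (opp i) := by
  intro x y hx hy hxy _
  rw [← mem_neighborSet, neighborSet_opp] at hx hy
  refine ⟨hub, by simp, ?_⟩
  rcases hx with rfl | rfl <;> rcases hy with rfl | rfl <;> simp_all [graph]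

lemma hasDetours_right (i : Fin k) : (graph k).HasDetours (right i) := by
  intro x y hx hy hxy _
  rw [← mem_neighborSet, neighborSet_right] at hx hy
  refine ⟨left i, by simp, ?_⟩
  rcases hx with rfl | rfl <;> rcases hy with rfl | rfl <;> simp_all [graph]

lemma compl_hub_subset {T : Set (Vertex k)} (hT : IsMEGSet (graph k) T) : {hub}ᶜ ⊆ T := by
  intro v hv
  cases v with
  | hub => exact absurd rfl hv
  | left i => exact (hasDetours_left i).mem_of_isMEGSet (adj_left_hub i) hT
  | opp i => exact (hasDetours_opp i).mem_of_isMEGSet (adj_left_opp i).symm hT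
  | right i => exact (hasDetours_right i).mem_of_isMEGSet (adj_right_hub i) hT

lemma monitors_left_right {i j : Fin k} (hij : i ≠ j) :
    Monitors (graph k) (left i) (right j) s(left i, hub) :=
  monitors_of_forall_adj_adj_eq (by simp) (by simp [graph]) (adj_left_hub i)
    (adj_right_hub j).symm fun w hw hwj => by
      rw [← mem_neighborSet, neighborSet_left] at hw
      rcases hw with rfl | rfl
      · rfl
      · exact absurd (by simpa [graph] using hwj) hij.symm

lemma monitors_right_left {i j : Fin k} (hij : i ≠ j) :
    Monitors (graph k) (right i) (left j) s(right i, hub) :=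
  monitors_of_forall_adj_adj_eq (by simp) (by simp [graph]) (adj_right_hub i)
    (adj_left_hub j).symm fun w hw hwj => by
      rw [← mem_neighborSet, neighborSet_right] at hw
      rcases hw with rfl | rfl
      · rfl
      · exact absurd (by simpa [graph] using hwj) hij.symm

lemma isMEGSet_compl_hub (hk : 2 ≤ k) : IsMEGSet (graph k) {hub}ᶜ := by
  have : Nontrivial (Fin k) := Fin.nontrivial_iff_two_le.mpr hk
  intro e he
  simp only [graph, edgeSet_fromEdgeSet] at he
  obtain ⟨⟨_, ⟨i, rfl⟩, he⟩, -⟩ := he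
  obtain ⟨j, hji⟩ := exists_ne i
  simp only [Set.mem_insert_iff, Set.mem_singleton_iff] at he
  rcases he with rfl | rfl | rfl | rfl
  · exact ⟨left i, by simp, right j, by simp, Sym2.eq_swap ▸ monitors_left_right hji.symm⟩
  · exact ⟨left i, by simp, opp i, by simp, monitors_of_adj (adj_left_opp i)⟩
  · exact ⟨opp i, by simp, right i, by simp, monitors_of_adj (adj_right_opp i).symm⟩
  · exact ⟨right i, by simp, left j, by simp, monitors_right_left hji.symm⟩

lemma megNum_graph (hk : 2 ≤ k) : megNum (graph k) = 3 * k := by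
  rw [megNum_eq_ncard (isMEGSet_compl_hub hk) fun _ => compl_hub_subset, Set.ncard_compl,
    Nat.card_eq_fintype_card, card_eq, Set.ncard_singleton, Nat.add_sub_cancel]

end Bouquet

open Bouquet in
theorem exists_graph_fes_tight (k : ℕ) (hk : 2 ≤ k) :
    ∃ (n : ℕ) (G : SimpleGraph (Fin n)), G.Connected ∧ fes G = k ∧
      megNum G = 3 * k + (leaves G).ncard := by
  let e := Fintype.equivFin (Vertex k)
  have hconn : ((graph k).map e).Connected :=
    (Iso.map e (graph k)).connected_iff.mp connected_graph
  refine ⟨_, (graph k).map e, hconn, ?_, ?_⟩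
  · have hfes := hconn.fes_add_card
    rw [Nat.card_fin, ← e.coe_toEmbedding, ncard_edgeSet_map, ncard_edgeSet_graph,
      e.coe_toEmbedding] at hfes
    have := Vertex.card_eq (k := k)
    omega
  · rw [(Iso.map e (graph k)).megNum_eq, megNum_graph hk, ← e.coe_toEmbedding, leaves_map,
      leaves_graph, Set.image_empty, Set.ncard_empty, add_zero]
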